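/- Under the hypotheses above, ∫₁^∞ cos(x t_m) dh(x) = 0 for every real t_m satisfying sin(t_m/2) = ±1/(2√2), and ∫₁^∞ sin(x t_k) dh(x) = 0 for every real t_k satisfying sin(t_k/2) = ±√(5/8). -/

import Mathlib

/-!
Let `μ` be the Lebesgue–Stieltjes measure of `h`. The symmetry `h x = 1 - h (1 - x)` makes
`μ` on `[0, 1]` invariant under `x ↦ 1 - x`, and the two functional equations give
`h (x + 1) = 1 + h x / 2`, so `μ` on `(1, ∞)` is half the translate by `1` of `μ` on `(0, ∞)`.
For the moments `∫ cos (x t) dμ` and `∫ sin (x t) dμ` over `[0, 1]` and over `(1, ∞)`, the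
reflection gives two linear relations and the translation two more. Eliminating the moments over
`(1, ∞)` from the translation relations (their determinant is `5 - 4 cos t = 1 + 8 sin² (t / 2)`)
and simplifying with the reflection relations yields
`(1 + 8 sin² (t / 2)) ∫₁^∞ cos (x t) dμ = (1 - 8 sin² (t / 2)) ∫₀¹ cos (x t) dμ` and
`(1 + 8 sin² (t / 2)) ∫₁^∞ sin (x t) dμ = (5 - 8 sin² (t / 2)) ∫₀¹ sin (x t) dμ`,
whose right-hand sides vanish at the given values of `t`.
-/

open MeasureTheory Set Real
open scoped ENNReal NNReal

namespace StieltjesFunction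

variable (f : StieltjesFunction ℝ)

theorem measure_Icc_of_continuous (hf : Continuous f) (a b : ℝ) :
    f.measure (Icc a b) = ENNReal.ofReal (f b - f a) := by
  rw [f.measure_Icc, (hf.continuousAt.continuousWithinAt).leftLim_eq]

theorem measure_singleton_of_continuous (hf : Continuous f) (a : ℝ) : f.measure {a} = 0 := by
  rw [← Icc_self, measure_Icc_of_continuous f hf, sub_self, ENNReal.ofReal_zero]

theorem map_const_sub_restrict_Icc (hf : Continuous f) {a b : ℝ} (hab : a ≤ b)
    (hsym : ∀ x ∈ Icc a b, f x + f (a + b - x) = f a + f b) :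
    (f.measure.restrict (Icc a b)).map (fun x => a + b - x) = f.measure.restrict (Icc a b) := by
  have : IsFiniteMeasure (f.measure.restrict (Icc a b)) :=
    isFiniteMeasure_restrict.2 measure_Icc_lt_top.ne
  refine Measure.ext_of_Iic _ _ fun x => ?_
  have hIci : Ici (a + b - x) ∩ Icc a b = Icc (max (a + b - x) a) b := by
    ext y; simp only [mem_inter_iff, mem_Ici, mem_Icc, max_le_iff]; tauto
  have hIic : Iic x ∩ Icc a b = Icc a (min x b) := by
    ext y; simp only [mem_inter_iff, mem_Iic, mem_Icc, le_min_iff]; tauto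
  rw [Measure.map_apply (by fun_prop) measurableSet_Iic,
    preimage_const_sub_Iic, Measure.restrict_apply measurableSet_Ici,
    Measure.restrict_apply measurableSet_Iic, hIci, hIic, measure_Icc_of_continuous f hf,
    measure_Icc_of_continuous f hf]
  rcases lt_or_ge x a with hxa | hax
  · rw [ENNReal.ofReal_of_nonpos, ENNReal.ofReal_of_nonpos]
    · exact sub_nonpos.2 (f.mono ((min_le_left x b).trans hxa.le))
    · exact sub_nonpos.2 (f.mono (le_max_of_le_left (by linarith)))
  · have hmax : max (a + b - x) a = a + b - min x b := by
      rw [← max_sub_sub_left, add_sub_cancel_right]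
    rw [hmax]
    congr 1
    linarith [hsym (min x b) ⟨le_min hax hab, min_le_right x b⟩]

theorem restrict_Ioi_add_eq_smul_map {a p c : ℝ} {k : ℝ≥0}
    (hf : ∀ x ≥ a, f (x + p) = k * f x + c) :
    f.measure.restrict (Ioi (a + p)) =
      (k : ℝ≥0∞) • (f.measure.restrict (Ioi a)).map (· + p) := by
  refine Measure.ext_of_Ioc' _ _ (fun u v _ => ?_) fun u v _ => ?_
  · rw [Measure.restrict_apply measurableSet_Ioc]
    exact (measure_mono inter_subset_left).trans_lt measure_Ioc_lt_top |>.ne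
  rw [Measure.smul_apply, Measure.map_apply (measurable_add_const p) measurableSet_Ioc,
    preimage_add_const_Ioc, Measure.restrict_apply measurableSet_Ioc,
    Measure.restrict_apply measurableSet_Ioc, Ioc_inter_Ioi, Ioc_inter_Ioi, measure_Ioc,
    measure_Ioc, smul_eq_mul, ← ENNReal.ofReal_coe_nnreal, ← ENNReal.ofReal_mul k.coe_nonneg]
  rcases lt_or_ge v (a + p) with hv | hv
  · rw [ENNReal.ofReal_of_nonpos, ENNReal.ofReal_of_nonpos]
    · exact mul_nonpos_of_nonneg_of_nonpos k.coe_nonneg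
        (sub_nonpos.2 (f.mono (le_max_of_le_right (by linarith))))
    · exact sub_nonpos.2 (f.mono (le_max_of_le_right hv.le))
  · have hmax : max u (a + p) = max (u - p) a + p := by
      rw [← max_add_add_right, sub_add_cancel]
    rw [hmax, hf _ (le_max_right _ _), ← sub_add_cancel v p, hf _ (by linarith),
      add_sub_cancel_right]
    congr 1
    ring

end StieltjesFunction

section Moments

variable {μ : Measure ℝ}

theorem integrableOn_cos_mul {s : Set ℝ} (hs : μ s ≠ ∞) (t : ℝ) :
    IntegrableOn (fun x => cos (x * t)) s μ :=
  have := isFiniteMeasure_restrict.2 hs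
  Integrable.of_bound (by fun_prop) 1 (ae_of_all _ fun x => by simpa using abs_cos_le_one _)

theorem integrableOn_sin_mul {s : Set ℝ} (hs : μ s ≠ ∞) (t : ℝ) :
    IntegrableOn (fun x => sin (x * t)) s μ :=
  have := isFiniteMeasure_restrict.2 hs
  Integrable.of_bound (by fun_prop) 1 (ae_of_all _ fun x => by simpa using abs_sin_le_one _)

theorem setIntegral_cos_mul_add {s : Set ℝ} (hs : μ s ≠ ∞) (t u : ℝ) :
    ∫ x in s, cos (x * t + u) ∂μ =
      cos u * ∫ x in s, cos (x * t) ∂μ - sin u * ∫ x in s, sin (x * t) ∂μ := by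
  simp_rw [cos_add]
  rw [integral_sub ((integrableOn_cos_mul hs t).mul_const _)
    ((integrableOn_sin_mul hs t).mul_const _), integral_mul_const, integral_mul_const]
  ring

theorem setIntegral_sin_mul_add {s : Set ℝ} (hs : μ s ≠ ∞) (t u : ℝ) :
    ∫ x in s, sin (x * t + u) ∂μ =
      sin u * ∫ x in s, cos (x * t) ∂μ + cos u * ∫ x in s, sin (x * t) ∂μ := by
  simp_rw [sin_add]
  rw [integral_add ((integrableOn_sin_mul hs t).mul_const _)
    ((integrableOn_cos_mul hs t).mul_const _), integral_mul_const, integral_mul_const]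
  ring

variable {E : Type*} [NormedAddCommGroup E] [NormedSpace ℝ E]

theorem setIntegral_Icc_comp_one_sub
    (hrefl : (μ.restrict (Icc 0 1)).map (fun x => 1 - x) = μ.restrict (Icc 0 1)) (g : ℝ → E) :
    ∫ x in Icc 0 1, g (1 - x) ∂μ = ∫ x in Icc 0 1, g x ∂μ := by
  conv_rhs => rw [← hrefl]
  exact ((measurableEmbedding_subLeft 1).integral_map g).symm

theorem setIntegral_Ioi_one_eq_half
    (hshift : μ.restrict (Ioi 1) = (2⁻¹ : ℝ≥0∞) • (μ.restrict (Ioi 0)).map (· + 1))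
    (g : ℝ → E) :
    ∫ x in Ioi 1, g x ∂μ = (2⁻¹ : ℝ) • ∫ x in Ioi 0, g (x + 1) ∂μ := by
  rw [hshift, integral_smul_measure, (measurableEmbedding_addRight 1).integral_map g]
  norm_num

theorem setIntegral_Ioi_zero_eq_add (h0 : μ {0} = 0) {g : ℝ → E}
    (hg : IntegrableOn g (Ioi 0) μ) :
    ∫ x in Ioi 0, g x ∂μ = ∫ x in Icc 0 1, g x ∂μ + ∫ x in Ioi 1, g x ∂μ := by
  rw [← Ioc_union_Ioi_eq_Ioi zero_le_one] at hg ⊢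
  rw [setIntegral_union (Ioc_disjoint_Ioi le_rfl) measurableSet_Ioi hg.left_of_union
    hg.right_of_union, setIntegral_congr_set (Ioc_ae_eq_Icc' h0)]

theorem setIntegral_Icc_cos_mul_reflect
    (hrefl : (μ.restrict (Icc 0 1)).map (fun x => 1 - x) = μ.restrict (Icc 0 1))
    (hs : μ (Icc 0 1) ≠ ∞) (t : ℝ) :
    ∫ x in Icc 0 1, cos (x * t) ∂μ =
      cos t * ∫ x in Icc 0 1, cos (x * t) ∂μ + sin t * ∫ x in Icc 0 1, sin (x * t) ∂μ :=
  calc ∫ x in Icc 0 1, cos (x * t) ∂μ = ∫ x in Icc 0 1, cos (x * -t + t) ∂μ := by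
        rw [← setIntegral_Icc_comp_one_sub hrefl]; congr with x; ring_nf
    _ = _ := by
        rw [setIntegral_cos_mul_add hs]
        simp only [mul_neg, cos_neg, sin_neg, integral_neg]
        ring

theorem setIntegral_Icc_sin_mul_reflect
    (hrefl : (μ.restrict (Icc 0 1)).map (fun x => 1 - x) = μ.restrict (Icc 0 1))
    (hs : μ (Icc 0 1) ≠ ∞) (t : ℝ) :
    ∫ x in Icc 0 1, sin (x * t) ∂μ =
      sin t * ∫ x in Icc 0 1, cos (x * t) ∂μ - cos t * ∫ x in Icc 0 1, sin (x * t) ∂μ :=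
  calc ∫ x in Icc 0 1, sin (x * t) ∂μ = ∫ x in Icc 0 1, sin (x * -t + t) ∂μ := by
        rw [← setIntegral_Icc_comp_one_sub hrefl]; congr with x; ring_nf
    _ = _ := by
        rw [setIntegral_sin_mul_add hs]
        simp only [mul_neg, cos_neg, sin_neg, integral_neg]
        ring

theorem setIntegral_Ioi_one_cos_mul_shift
    (hshift : μ.restrict (Ioi 1) = (2⁻¹ : ℝ≥0∞) • (μ.restrict (Ioi 0)).map (· + 1))
    (h0 : μ {0} = 0) (hfin : μ (Ioi 0) ≠ ∞) (t : ℝ) :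
    2 * ∫ x in Ioi 1, cos (x * t) ∂μ =
      cos t * (∫ x in Icc 0 1, cos (x * t) ∂μ + ∫ x in Ioi 1, cos (x * t) ∂μ) -
        sin t * (∫ x in Icc 0 1, sin (x * t) ∂μ + ∫ x in Ioi 1, sin (x * t) ∂μ) := by
  have h := setIntegral_Ioi_one_eq_half hshift fun x => cos (x * t)
  simp_rw [add_mul, one_mul] at h
  rw [setIntegral_cos_mul_add hfin, setIntegral_Ioi_zero_eq_add h0 (integrableOn_cos_mul hfin t),
    setIntegral_Ioi_zero_eq_add h0 (integrableOn_sin_mul hfin t), smul_eq_mul] at h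
  linear_combination 2 * h

theorem setIntegral_Ioi_one_sin_mul_shift
    (hshift : μ.restrict (Ioi 1) = (2⁻¹ : ℝ≥0∞) • (μ.restrict (Ioi 0)).map (· + 1))
    (h0 : μ {0} = 0) (hfin : μ (Ioi 0) ≠ ∞) (t : ℝ) :
    2 * ∫ x in Ioi 1, sin (x * t) ∂μ =
      sin t * (∫ x in Icc 0 1, cos (x * t) ∂μ + ∫ x in Ioi 1, cos (x * t) ∂μ) +
        cos t * (∫ x in Icc 0 1, sin (x * t) ∂μ + ∫ x in Ioi 1, sin (x * t) ∂μ) := by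
  have h := setIntegral_Ioi_one_eq_half hshift fun x => sin (x * t)
  simp_rw [add_mul, one_mul] at h
  rw [setIntegral_sin_mul_add hfin, setIntegral_Ioi_zero_eq_add h0 (integrableOn_cos_mul hfin t),
    setIntegral_Ioi_zero_eq_add h0 (integrableOn_sin_mul hfin t), smul_eq_mul] at h
  linear_combination 2 * h

theorem one_add_eight_sin_sq_mul_setIntegral_Ioi_one_cos
    (hrefl : (μ.restrict (Icc 0 1)).map (fun x => 1 - x) = μ.restrict (Icc 0 1))
    (hshift : μ.restrict (Ioi 1) = (2⁻¹ : ℝ≥0∞) • (μ.restrict (Ioi 0)).map (· + 1))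
    (h0 : μ {0} = 0) (hfin : μ (Ici 0) ≠ ∞) (t : ℝ) :
    (1 + 8 * sin (t / 2) ^ 2) * ∫ x in Ioi 1, cos (x * t) ∂μ =
      (1 - 8 * sin (t / 2) ^ 2) * ∫ x in Icc 0 1, cos (x * t) ∂μ := by
  have hco : cos t = 1 - 2 * sin (t / 2) ^ 2 := by
    rw [← cos_two_mul_eq_one_sub, mul_div_cancel₀ t two_ne_zero]
  have ha := setIntegral_Icc_cos_mul_reflect hrefl
    (ne_top_of_le_ne_top hfin (measure_mono Icc_subset_Ici_self)) t
  have hs : μ (Ioi 0) ≠ ∞ := ne_top_of_le_ne_top hfin (measure_mono Ioi_subset_Ici_self)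
  have hc := setIntegral_Ioi_one_cos_mul_shift hshift h0 hs t
  have hd := setIntegral_Ioi_one_sin_mul_shift hshift h0 hs t
  set c := ∫ x in Icc 0 1, cos (x * t) ∂μ
  set A := ∫ x in Ioi 1, cos (x * t) ∂μ
  linear_combination (2 - cos t) * hc - sin t * hd + 2 * ha - (A + c) * sin_sq_add_cos_sq t
    + 4 * (A + c) * hco

theorem one_add_eight_sin_sq_mul_setIntegral_Ioi_one_sin
    (hrefl : (μ.restrict (Icc 0 1)).map (fun x => 1 - x) = μ.restrict (Icc 0 1))
    (hshift : μ.restrict (Ioi 1) = (2⁻¹ : ℝ≥0∞) • (μ.restrict (Ioi 0)).map (· + 1))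
    (h0 : μ {0} = 0) (hfin : μ (Ici 0) ≠ ∞) (t : ℝ) :
    (1 + 8 * sin (t / 2) ^ 2) * ∫ x in Ioi 1, sin (x * t) ∂μ =
      (5 - 8 * sin (t / 2) ^ 2) * ∫ x in Icc 0 1, sin (x * t) ∂μ := by
  have hco : cos t = 1 - 2 * sin (t / 2) ^ 2 := by
    rw [← cos_two_mul_eq_one_sub, mul_div_cancel₀ t two_ne_zero]
  have hb := setIntegral_Icc_sin_mul_reflect hrefl
    (ne_top_of_le_ne_top hfin (measure_mono Icc_subset_Ici_self)) t
  have hs : μ (Ioi 0) ≠ ∞ := ne_top_of_le_ne_top hfin (measure_mono Ioi_subset_Ici_self)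
  have hc := setIntegral_Ioi_one_cos_mul_shift hshift h0 hs t
  have hd := setIntegral_Ioi_one_sin_mul_shift hshift h0 hs t
  set s := ∫ x in Icc 0 1, sin (x * t) ∂μ
  set B := ∫ x in Ioi 1, sin (x * t) ∂μ
  linear_combination (2 - cos t) * hd + sin t * hc - 2 * hb - (B + s) * sin_sq_add_cos_sq t
    + 4 * (B + s) * hco

end Moments

theorem add_one_eq_of_functional_equations {φ : ℝ → ℝ} (hsym : φ 0 = 1 - φ 1)
    (heq1 : ∀ x ≥ (0 : ℝ), φ x = 2 * φ (x / (x + 1)))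
    (heq2 : ∀ x > (0 : ℝ), φ x + φ (1 / x) = 2) {x : ℝ} (hx : 0 ≤ x) :
    φ (x + 1) = 2⁻¹ * φ x + 1 := by
  rcases hx.eq_or_lt with rfl | hx
  · have h0 : φ 0 = 2 * φ 0 := by simpa using heq1 0 le_rfl
    rw [zero_add]
    linarith
  · have h := heq1 (1 / x) (by positivity)
    rw [show 1 / x / (1 / x + 1) = 1 / (x + 1) by field_simp; ring] at h
    linarith [heq2 x hx, heq2 (x + 1) (by linarith)]

theorem stmt10_general (h : StieltjesFunction ℝ) (hcont : Continuous (h : ℝ → ℝ))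
    (hmass : h.measure (Set.Ici (0:ℝ)) = 2)
    (hsym : ∀ x ∈ Set.Icc (0:ℝ) 1, h x = 1 - h (1 - x))
    (heq1 : ∀ x ≥ (0:ℝ), h x = 2 * h (x / (x + 1)))
    (heq2 : ∀ x > (0:ℝ), h x + h (1 / x) = 2) :
    (∀ t : ℝ, (Real.sin (t / 2) = 1 / (2 * Real.sqrt 2) ∨
        Real.sin (t / 2) = -(1 / (2 * Real.sqrt 2))) →
      (∫ x in Set.Ioi (1:ℝ), Real.cos (x * t) ∂h.measure) = 0) ∧
    (∀ t : ℝ, (Real.sin (t / 2) = Real.sqrt (5 / 8) ∨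
        Real.sin (t / 2) = -Real.sqrt (5 / 8)) →
      (∫ x in Set.Ioi (1:ℝ), Real.sin (x * t) ∂h.measure) = 0) := by
  have hsym0 : h 0 = 1 - h 1 := by simpa using hsym 0 (left_mem_Icc.2 zero_le_one)
  have hrefl := h.map_const_sub_restrict_Icc hcont zero_le_one fun x hx => by
    rw [zero_add, hsym x hx]; linarith
  simp only [zero_add] at hrefl
  have hshift := h.restrict_Ioi_add_eq_smul_map (a := 0) (k := 2⁻¹) fun x hx =>
    add_one_eq_of_functional_equations hsym0 heq1 heq2 hx
  rw [zero_add, ENNReal.coe_inv_two] at hshift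
  have hfin : h.measure (Ici 0) ≠ ∞ := by rw [hmass]; exact ENNReal.ofNat_ne_top
  have hμ0 := h.measure_singleton_of_continuous hcont 0
  refine ⟨fun t ht => ?_, fun t ht => ?_⟩
  · have hsq : sin (t / 2) ^ 2 = 1 / 8 := by
      rw [sq_eq_sq_iff_eq_or_eq_neg.2 ht]; norm_num [div_pow, mul_pow]
    have key := one_add_eight_sin_sq_mul_setIntegral_Ioi_one_cos hrefl hshift hμ0 hfin t
    rw [hsq] at key
    linarith
  · have hsq : sin (t / 2) ^ 2 = 5 / 8 := by
      rw [sq_eq_sq_iff_eq_or_eq_neg.2 ht, sq_sqrt (by norm_num)]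
    have key := one_add_eight_sin_sq_mul_setIntegral_Ioi_one_sin hrefl hshift hμ0 hfin t
    rw [hsq] at key
    linarith

/-- Under the Minkowski-type hypotheses on `h`, `∫₁^∞ cos(x t) dh = 0` whenever
`sin(t/2) = ±1/(2√2)`, and `∫₁^∞ sin(x t) dh = 0` whenever `sin(t/2) = ±√(5/8)`. -/
theorem stmt10 (h : StieltjesFunction ℝ) (hcont : Continuous (h : ℝ → ℝ))
    (hmass : h.measure (Set.Ici (0:ℝ)) = 2)
    (hmass1 : h.measure (Set.Icc (0:ℝ) 1) = 1)
    (hsym : ∀ x ∈ Set.Icc (0:ℝ) 1, h x = 1 - h (1 - x))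
    (heq1 : ∀ x ≥ (0:ℝ), h x = 2 * h (x / (x + 1)))
    (heq2 : ∀ x > (0:ℝ), h x + h (1 / x) = 2) :
    (∀ t : ℝ, (Real.sin (t / 2) = 1 / (2 * Real.sqrt 2) ∨
        Real.sin (t / 2) = -(1 / (2 * Real.sqrt 2))) →
      (∫ x in Set.Ioi (1:ℝ), Real.cos (x * t) ∂h.measure) = 0) ∧
    (∀ t : ℝ, (Real.sin (t / 2) = Real.sqrt (5 / 8) ∨
        Real.sin (t / 2) = -Real.sqrt (5 / 8)) →
      (∫ x in Set.Ioi (1:ℝ), Real.sin (x * t) ∂h.measure) = 0) :=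
  stmt10_general h hcont hmass hsym heq1 heq2
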